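/- Fix γ_A = 1/16 and γ_B = (13√13 − 35)/108. Define constants c₁ = 8/(3−γ_B)², c₂ = (1+γ_B)²/((1−γ_A)(1−γ_B)(3−γ_B)²), c₃ = γ_A(1+γ_B)²/((1−γ_A)(1−γ_B)(3−γ_B)²), c₄ = γ_B/((1−γ_A)(1−γ_B)), and t₁ = (2−γ_B)/3, t₂ = (4−3γ_A−2γ_B+γ_Aγ_B)/6, t₃ = (1−γ_B)/6, t₄ = (1−γ_A)/3. Then the function η(k) := c₁t₁^k + c₂t₂^k − c₃t₃^k − c₄t₄^k (for k ≥ 1, with η(0) := 1) is strictly decreasing in k over the nonnegative integers. -/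

import Mathlib

/-! Pair the four exponentials as `(c₁ t₁ᵏ - c₄ t₄ᵏ) + (c₂ t₂ᵏ - c₃ t₃ᵏ)`. A difference
`a tᵏ - b sᵏ` with `0 ≤ s ≤ t` decreases in `k` as soon as `b (1 - s) < a (1 - t)`, since its
one-step decrement is `a (1 - t) tᵏ - b (1 - s) sᵏ`. For the first pair this comes down to
`c₄ (1 - t₄) < 0.1 < 0.3 < c₁ (1 - t₁)`; for the second, `c₃ = γA c₂` reduces it to
`γA (1 - t₃) < 1 - t₂`. The first step, from `η 0 = 1` to `η 1 ≈ 0.67`, is checked directly. -/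

noncomputable def γA : ℝ := 1 / 16
noncomputable def γB : ℝ := (13 * Real.sqrt 13 - 35) / 108

noncomputable def c₁ : ℝ := 8 / (3 - γB) ^ 2
noncomputable def c₂ : ℝ := (1 + γB) ^ 2 / ((1 - γA) * (1 - γB) * (3 - γB) ^ 2)
noncomputable def c₃ : ℝ := γA * (1 + γB) ^ 2 / ((1 - γA) * (1 - γB) * (3 - γB) ^ 2)
noncomputable def c₄ : ℝ := γB / ((1 - γA) * (1 - γB))
noncomputable def t₁ : ℝ := (2 - γB) / 3
noncomputable def t₂ : ℝ := (4 - 3 * γA - 2 * γB + γA * γB) / 6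
noncomputable def t₃ : ℝ := (1 - γB) / 6
noncomputable def t₄ : ℝ := (1 - γA) / 3

noncomputable def η (k : ℕ) : ℝ :=
  if k = 0 then 1 else c₁ * t₁ ^ k + c₂ * t₂ ^ k - c₃ * t₃ ^ k - c₄ * t₄ ^ k

theorem strictAnti_mul_pow_sub_mul_pow {a b s t : ℝ} (hs : 0 ≤ s) (hst : s ≤ t) (ht : 0 < t)
    (hb : 0 ≤ b * (1 - s)) (hba : b * (1 - s) < a * (1 - t)) :
    StrictAnti fun k : ℕ => a * t ^ k - b * s ^ k := by
  refine strictAnti_nat_of_succ_lt fun k => ?_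
  have hdom : b * (1 - s) * s ^ k < a * (1 - t) * t ^ k :=
    (mul_le_mul_of_nonneg_left (pow_le_pow_left₀ hs hst k) hb).trans_lt
      (mul_lt_mul_of_pos_right hba (pow_pos ht k))
  calc a * t ^ (k + 1) - b * s ^ (k + 1)
      = (a * t ^ k - b * s ^ k) - (a * (1 - t) * t ^ k - b * (1 - s) * s ^ k) := by ring
    _ < a * t ^ k - b * s ^ k := by linarith

lemma γB_gt : (0.109 : ℝ) < γB := by
  have h13 : Real.sqrt 13 ^ 2 = 13 := Real.sq_sqrt (by norm_num)
  have : (3.6 : ℝ) ≤ Real.sqrt 13 := by nlinarith [Real.sqrt_nonneg 13]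
  unfold γB
  linarith

lemma γB_lt : γB < (0.111 : ℝ) := by
  have h13 : Real.sqrt 13 ^ 2 = 13 := Real.sq_sqrt (by norm_num)
  have : Real.sqrt 13 ≤ (3.61 : ℝ) := by nlinarith [Real.sqrt_nonneg 13]
  unfold γB
  linarith

lemma t₁_pos : 0 < t₁ := by unfold t₁; linarith [γB_lt]

lemma t₃_pos : 0 < t₃ := by unfold t₃; linarith [γB_lt]

lemma t₄_pos : 0 < t₄ := by unfold t₄ γA; norm_num

lemma t₄_le_t₁ : t₄ ≤ t₁ := by unfold t₁ t₄ γA; linarith [γB_lt]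

lemma t₃_le_t₂ : t₃ ≤ t₂ := by unfold t₂ t₃ γA; linarith [γB_lt]

lemma c₃_eq : c₃ = γA * c₂ := by unfold c₃ c₂; ring

lemma c₂_pos : 0 < c₂ :=
  div_pos (pow_pos (by linarith [γB_gt]) 2) <| mul_pos
    (mul_pos (by norm_num [γA]) (by linarith [γB_lt])) (pow_pos (by linarith [γB_lt]) 2)

lemma c₃_pos : 0 < c₃ := c₃_eq ▸ mul_pos (by norm_num [γA]) c₂_pos

lemma c₄_pos : 0 < c₄ :=
  div_pos (by linarith [γB_gt]) (mul_pos (by norm_num [γA]) (by linarith [γB_lt]))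

lemma c₄_mul_one_sub_t₄_lt_c₁_mul_one_sub_t₁ : c₄ * (1 - t₄) < c₁ * (1 - t₁) := by
  have h₄ : c₄ * (1 - t₄) < 0.1 := by
    unfold c₄ t₄ γA
    rw [div_mul_eq_mul_div, div_lt_iff₀ (by nlinarith [γB_lt])]
    nlinarith [γB_gt, γB_lt]
  have h₁ : 0.3 < c₁ * (1 - t₁) := by
    unfold c₁ t₁
    rw [div_mul_eq_mul_div, lt_div_iff₀ (by nlinarith [γB_lt])]
    nlinarith [γB_gt, γB_lt]
  linarith

lemma c₃_mul_one_sub_t₃_lt_c₂_mul_one_sub_t₂ : c₃ * (1 - t₃) < c₂ * (1 - t₂) := by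
  rw [c₃_eq, mul_assoc, mul_comm γA, mul_assoc]
  refine mul_lt_mul_of_pos_left ?_ c₂_pos
  unfold t₂ t₃ γA
  nlinarith [γB_gt, γB_lt]

lemma η_one_lt : η 1 < 1 := by
  have h₁ : c₁ * t₁ < 0.62 := by
    unfold c₁ t₁
    rw [div_mul_eq_mul_div, div_lt_iff₀ (by nlinarith [γB_lt])]
    nlinarith [γB_gt, γB_lt]
  have h₂ : c₂ * t₂ < 0.12 := by
    unfold c₂ t₂ γA
    rw [div_mul_eq_mul_div, div_lt_iff₀ (by nlinarith [γB_lt])]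
    nlinarith [γB_gt, γB_lt]
  have h₃ : 0 ≤ c₃ * t₃ := mul_nonneg c₃_pos.le t₃_pos.le
  have h₄ : 0 ≤ c₄ * t₄ := mul_nonneg c₄_pos.le t₄_pos.le
  simp only [η, one_ne_zero, if_false, pow_one]
  linarith

theorem stmt_10 : StrictAnti η := by
  have hpairs : StrictAnti fun k : ℕ => (c₁ * t₁ ^ k - c₄ * t₄ ^ k) + (c₂ * t₂ ^ k - c₃ * t₃ ^ k) :=
    (strictAnti_mul_pow_sub_mul_pow t₄_pos.le t₄_le_t₁ t₁_pos
        (mul_nonneg c₄_pos.le (by unfold t₄ γA; norm_num))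
        c₄_mul_one_sub_t₄_lt_c₁_mul_one_sub_t₁).add
      (strictAnti_mul_pow_sub_mul_pow t₃_pos.le t₃_le_t₂ (t₃_pos.trans_le t₃_le_t₂)
        (mul_nonneg c₃_pos.le (by unfold t₃; linarith [γB_gt]))
        c₃_mul_one_sub_t₃_lt_c₂_mul_one_sub_t₂)
  refine strictAnti_nat_of_succ_lt fun k => ?_
  rcases k.eq_zero_or_pos with rfl | hk
  · simpa [η] using η_one_lt
  · have := hpairs (Nat.lt_add_one k)
    dsimp only at this
    simp only [η, k.succ_ne_zero, hk.ne', if_false]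
    linarith
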